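/- One-dimensional phases of the modified honeycomb lattice: For φ ∈ ℝ, consider the real symmetric 2×2 matrix A(λ) := [[6 cos φ + λ, 3 sin φ], [3 sin φ, −λ]] (the Fourier-transformed dressed coupling matrix Ĵ_hc((0,0), λ) of the J1–J2 honeycomb lattice at q = (0,0)). Its smaller eigenvalue equals 3 cos φ − √((λ + 3 cos φ)² + 9 sin²φ); in particular the smaller eigenvalue is at most 3 cos φ − 3|sin φ| for every λ ∈ ℝ, with equality exactly at λ = −3 cos φ when sin φ ≠ 0. The corresponding eigenvectors at λ = −3 cos φ are (1,1) and (1,−1), yielding the one-dimensional ground state energies per site E^{(±)}_min = 3(cos φ ± sin φ). -/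
import Mathlib
set_option linter.unnecessarySeqFocus false


open Real

/-- The Fourier-transformed dressed coupling matrix of the `J₁–J₂` honeycomb
lattice at `q = (0,0)`: `A(λ) = [[6 cos φ + λ, 3 sin φ], [3 sin φ, -λ]]`. -/
noncomputable def Ahc (φ lam : ℝ) : Matrix (Fin 2) (Fin 2) ℝ :=
  !![6 * Real.cos φ + lam, 3 * Real.sin φ;
     3 * Real.sin φ, -lam]

/-- One-dimensional phases of the modified honeycomb lattice: the smaller
eigenvalue of `A(λ)` equals `3 cos φ − √((λ + 3 cos φ)² + 9 sin²φ)`; it is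
`≤ 3 cos φ − 3|sin φ|` for every `λ`, with equality exactly at `λ = −3 cos φ`
when `sin φ ≠ 0`; and at `λ = −3 cos φ` the vectors `(1,1)` and `(1,−1)` are
eigenvectors with eigenvalues `3(cos φ ± sin φ)`. -/
theorem honeycomb_one_dimensional_phases (φ : ℝ) :
    (∀ lam : ℝ, IsLeast
      {e : ℝ | ∃ v : Fin 2 → ℝ, v ≠ 0 ∧ (Ahc φ lam).mulVec v = e • v}
      (3 * Real.cos φ - Real.sqrt ((lam + 3 * Real.cos φ) ^ 2 + 9 * Real.sin φ ^ 2)))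
    ∧
    (∀ lam : ℝ,
      3 * Real.cos φ - Real.sqrt ((lam + 3 * Real.cos φ) ^ 2 + 9 * Real.sin φ ^ 2)
        ≤ 3 * Real.cos φ - 3 * |Real.sin φ|)
    ∧
    (Real.sin φ ≠ 0 → ∀ lam : ℝ,
      (3 * Real.cos φ - Real.sqrt ((lam + 3 * Real.cos φ) ^ 2 + 9 * Real.sin φ ^ 2)
          = 3 * Real.cos φ - 3 * |Real.sin φ|
        ↔ lam = -3 * Real.cos φ))
    ∧
    (Ahc φ (-3 * Real.cos φ)).mulVec ![1, 1]
      = (3 * (Real.cos φ + Real.sin φ)) • ![1, 1]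
    ∧
    (Ahc φ (-3 * Real.cos φ)).mulVec ![1, -1]
      = (3 * (Real.cos φ - Real.sin φ)) • ![1, -1] := by
  have habs : ∀ lam : ℝ, Real.sqrt (9 * Real.sin φ ^ 2) = 3 * |Real.sin φ| := by
    intro lam
    rw [show (9 : ℝ) * Real.sin φ ^ 2 = (3 * Real.sin φ) ^ 2 by ring,
      Real.sqrt_sq_eq_abs, abs_mul]
    norm_num
  refine ⟨?_, ?_, ?_, ?_, ?_⟩
  · intro lam
    set u : ℝ := lam + 3 * Real.cos φ with hu
    set s : ℝ := Real.sqrt (u ^ 2 + 9 * Real.sin φ ^ 2) with hs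
    have hs0 : 0 ≤ s := Real.sqrt_nonneg _
    have hs2 : s ^ 2 = u ^ 2 + 9 * Real.sin φ ^ 2 := by
      rw [hs, Real.sq_sqrt]; positivity
    constructor
    · by_cases h : s + u = 0
      · have hb : Real.sin φ = 0 := by nlinarith [sq_nonneg (Real.sin φ)]
        refine ⟨![1, 0], ?_, ?_⟩
        · intro hcon
          have := congrFun hcon 0
          simp at this
        · funext i
          fin_cases i <;>
            simp [Ahc, Matrix.mulVec, dotProduct, Fin.sum_univ_two, hb] <;>
            linear_combination h - hu
      · refine ⟨![3 * Real.sin φ, -(u + s)], ?_, ?_⟩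
        · intro hcon
          have := congrFun hcon 1
          simp at this
          exact h (by linarith)
        · funext i
          fin_cases i
          · simp [Ahc, Matrix.mulVec, dotProduct, Fin.sum_univ_two]
            linear_combination (-(3 * Real.sin φ)) * hu
          · simp [Ahc, Matrix.mulVec, dotProduct, Fin.sum_univ_two]
            linear_combination (-(s + u)) * hu - hs2
    · rintro e ⟨v, hv, hev⟩
      have eq0 := congrFun hev 0
      have eq1 := congrFun hev 1
      simp [Ahc, Matrix.mulVec, dotProduct, Fin.sum_univ_two] at eq0 eq1
      have key : (3 * Real.cos φ - e) ^ 2 = s ^ 2 := by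
        have hx : ((3 * Real.cos φ - e) ^ 2 - s ^ 2) * v 0 = 0 := by
          linear_combination (-lam - e) * eq0 - 3 * Real.sin φ * eq1 - v 0 * hs2
        have hy : ((3 * Real.cos φ - e) ^ 2 - s ^ 2) * v 1 = 0 := by
          linear_combination (6 * Real.cos φ + lam - e) * eq1 - 3 * Real.sin φ * eq0
            - v 1 * hs2
        rcases mul_eq_zero.1 hx with h | h
        · linarith
        rcases mul_eq_zero.1 hy with h' | h'
        · linarith
        exact absurd (funext fun i => by fin_cases i <;> assumption) hv
      nlinarith
  · intro lam
    have h1 : 3 * |Real.sin φ| ≤ Real.sqrt ((lam + 3 * Real.cos φ) ^ 2 + 9 * Real.sin φ ^ 2) := by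
      rw [← habs lam]
      exact Real.sqrt_le_sqrt (by nlinarith [sq_nonneg (lam + 3 * Real.cos φ)])
    linarith
  · intro hsin lam
    constructor
    · intro h
      have h' : Real.sqrt ((lam + 3 * Real.cos φ) ^ 2 + 9 * Real.sin φ ^ 2)
          = Real.sqrt (9 * Real.sin φ ^ 2) := by rw [habs lam]; linarith
      have := (Real.sqrt_inj (by positivity) (by positivity)).1 h'
      nlinarith [sq_nonneg (lam + 3 * Real.cos φ)]
    · intro h
      subst h
      rw [show (-3 * Real.cos φ + 3 * Real.cos φ) ^ 2 + 9 * Real.sin φ ^ 2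
          = 9 * Real.sin φ ^ 2 by ring, habs 0]
  · funext i
    fin_cases i <;>
      simp [Ahc, Matrix.mulVec, dotProduct, Fin.sum_univ_two] <;> ring
  · funext i
    fin_cases i <;>
      simp [Ahc, Matrix.mulVec, dotProduct, Fin.sum_univ_two] <;> ring
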